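/- Let L be a real symmetric positive semidefinite n×n matrix with largest eigenvalue λ₁, and let (ψ_j)_{j=0,...,J} be functions ψ_j : [0,λ₁] → [0,1] with ∑_{j=0}^J ψ_j(λ) = 1 for all λ ∈ [0,λ₁]. Then the collection of vectors {√ψ_j(L) δ_i : j = 0,...,J, i = 1,...,n} (where δ_i is the i-th standard basis vector and √ψ_j(L) is defined by functional calculus) forms a tight frame with bound 1: for every f ∈ ℝⁿ, ∑_{j=0}^J ∑_{i=1}^n ⟨f, √ψ_j(L) δ_i⟩² = ‖f‖². -/

import Mathlib

/-!
Write `Mⱼ = √ψⱼ(L)`. The frame sum of `f` is `⟨f, ∑ⱼ Mⱼ Mⱼᵀ f⟩`. Each `Mⱼ` is symmetric, so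
multiplicativity of the functional calculus gives `Mⱼ Mⱼᵀ = ψⱼ(L)`, and additivity gives
`∑ⱼ ψⱼ(L) = (∑ⱼ ψⱼ)(L) = 1`, because the `ψⱼ` sum to `1` on the spectrum `⊆ [0, λ₁]`.
-/

open scoped BigOperators Matrix

/-- Functional calculus for a real symmetric matrix: `ρ(L) = ∑ ℓ ρ(λ_ℓ) χ_ℓ χ_ℓᵀ`. -/
noncomputable def matrixFunCalc {n : ℕ} {L : Matrix (Fin n) (Fin n) ℝ}
    (hL : L.IsHermitian) (ρ : ℝ → ℝ) : Matrix (Fin n) (Fin n) ℝ :=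
  ∑ ℓ : Fin n, ρ (hL.eigenvalues ℓ) •
    Matrix.of (fun i j : Fin n => hL.eigenvectorBasis ℓ i * hL.eigenvectorBasis ℓ j)

theorem matrixFunCalc_eq_cfc {n : ℕ} {L : Matrix (Fin n) (Fin n) ℝ} (hL : L.IsHermitian)
    (ρ : ℝ → ℝ) : matrixFunCalc hL ρ = cfc ρ L := by
  ext i j
  simp [hL.cfc_eq, Matrix.IsHermitian.cfc, Unitary.conjStarAlgAut_apply, matrixFunCalc,
    Matrix.mul_apply, Matrix.sum_apply, Matrix.diagonal_apply]
  exact Finset.sum_congr rfl fun _ _ => by ring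

theorem Matrix.sum_sq_dotProduct_mulVec_single {k m R : Type*} [Fintype k] [Fintype m]
    [DecidableEq m] [CommRing R] (M : Matrix k m R) (f : k → R) :
    ∑ i, (f ⬝ᵥ M *ᵥ Pi.single i 1) ^ 2 = f ⬝ᵥ (M * Mᵀ) *ᵥ f := by
  rw [← Matrix.mulVec_mulVec, Matrix.dotProduct_mulVec, Matrix.mulVec_transpose]
  simp [Matrix.vecMul, dotProduct, sq]

theorem Matrix.IsHermitian.sum_cfc_sqrt_mul_transpose {n ι : Type*} [Fintype n] [DecidableEq n]
    [Fintype ι] {A : Matrix n n ℝ} (hA : A.IsHermitian) (ψ : ι → ℝ → ℝ)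
    (hψ_nonneg : ∀ j, ∀ x ∈ spectrum ℝ A, 0 ≤ ψ j x)
    (hψ_sum : ∀ x ∈ spectrum ℝ A, ∑ j, ψ j x = 1) :
    ∑ j, cfc (fun x => √(ψ j x)) A * (cfc (fun x => √(ψ j x)) A)ᵀ = 1 := by
  have hcont (f : ℝ → ℝ) : ContinuousOn f (spectrum ℝ A) := A.finite_real_spectrum.continuousOn f
  have hsq (j : ι) :
      cfc (fun x => √(ψ j x)) A * (cfc (fun x => √(ψ j x)) A)ᵀ = cfc (ψ j) A := by
    rw [← Matrix.conjTranspose_eq_transpose_of_trivial, ← Matrix.star_eq_conjTranspose,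
      IsSelfAdjoint.cfc.star_eq, ← cfc_mul _ _ A (hcont _) (hcont _)]
    exact cfc_congr fun x hx => Real.mul_self_sqrt (hψ_nonneg j x hx)
  rw [Finset.sum_congr rfl fun j _ => hsq j, ← cfc_sum_univ ψ A fun j => hcont (ψ j)]
  exact (cfc_congr fun x hx => by simpa using hψ_sum x hx).trans (cfc_one ℝ A hA.isSelfAdjoint)

theorem sgwt_tight_frame_general {n : ℕ} (L : Matrix (Fin n) (Fin n) ℝ)
    (hL : L.IsHermitian) (hPSD : L.PosSemidef) (lam1 : ℝ)
    (hmax : ∀ ℓ : Fin n, hL.eigenvalues ℓ ≤ lam1)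
    (J : ℕ) (ψ : Fin (J + 1) → ℝ → ℝ)
    (hrange : ∀ j, ∀ x ∈ Set.Icc (0 : ℝ) lam1, ψ j x ∈ Set.Icc (0 : ℝ) 1)
    (hsum : ∀ x ∈ Set.Icc (0 : ℝ) lam1, ∑ j : Fin (J + 1), ψ j x = 1) :
    ∀ f : Fin n → ℝ,
      ∑ j : Fin (J + 1), ∑ i : Fin n,
        (f ⬝ᵥ (matrixFunCalc hL (fun x => Real.sqrt (ψ j x))).mulVec (Pi.single i 1)) ^ 2
      = f ⬝ᵥ f := by
  intro f
  have hspec : spectrum ℝ L ⊆ Set.Icc 0 lam1 := by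
    rw [hL.spectrum_real_eq_range_eigenvalues]
    rintro _ ⟨ℓ, rfl⟩
    exact ⟨hPSD.eigenvalues_nonneg ℓ, hmax ℓ⟩
  have hframe := hL.sum_cfc_sqrt_mul_transpose ψ (fun j x hx => (hrange j x (hspec hx)).1)
    (fun x hx => hsum x (hspec hx))
  simp only [matrixFunCalc_eq_cfc, Matrix.sum_sq_dotProduct_mulVec_single, ← dotProduct_sum,
    ← Matrix.sum_mulVec, hframe, Matrix.one_mulVec]

/-- the SGWT family `{√ψ_j(L) δ_i}` built from a partition of unity on
`[0, λ₁]` is a tight frame with bound 1. -/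
theorem sgwt_tight_frame {n : ℕ} (L : Matrix (Fin n) (Fin n) ℝ)
    (hL : L.IsHermitian) (hPSD : L.PosSemidef) (lam1 : ℝ)
    (hmax : ∀ ℓ : Fin n, hL.eigenvalues ℓ ≤ lam1)
    (hattained : ∃ ℓ : Fin n, hL.eigenvalues ℓ = lam1)
    (J : ℕ) (ψ : Fin (J + 1) → ℝ → ℝ)
    (hrange : ∀ j, ∀ x ∈ Set.Icc (0 : ℝ) lam1, ψ j x ∈ Set.Icc (0 : ℝ) 1)
    (hsum : ∀ x ∈ Set.Icc (0 : ℝ) lam1, ∑ j : Fin (J + 1), ψ j x = 1) :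
    ∀ f : Fin n → ℝ,
      ∑ j : Fin (J + 1), ∑ i : Fin n,
        (f ⬝ᵥ (matrixFunCalc hL (fun x => Real.sqrt (ψ j x))).mulVec (Pi.single i 1)) ^ 2
      = f ⬝ᵥ f :=
  sgwt_tight_frame_general L hL hPSD lam1 hmax J ψ hrange hsum
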